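/- For every temperature 0 < τ < 1, the binary self-training loss has an exponential tail: ℓ_τ(m) / e^{−m} → 1 as m → ∞, where ℓ_τ(m) = −σ(m/τ)·log σ(m) − (1 − σ(m/τ))·log(1 − σ(m)). -/

import Mathlib

open Real Filter Topology

/-- The logistic sigmoid `σ t = 1 / (1 + exp (−t))`. -/
noncomputable def sigmoid (t : ℝ) : ℝ := 1 / (1 + Real.exp (-t))

/-- The binary self-training loss at margin `m` with temperature `τ`:
`ℓ_τ(m) = −σ(m/τ)·log σ(m) − (1 − σ(m/τ))·log (1 − σ(m))`. -/
noncomputable def selfTrainLoss (τ m : ℝ) : ℝ :=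
  -_root_.sigmoid (m / τ) * Real.log (_root_.sigmoid m)
    - (1 - _root_.sigmoid (m / τ)) * Real.log (1 - _root_.sigmoid m)

/-!
Since `1 - σ(m) = e^{-m} σ(m)`, the loss is `log (1 + e^{-m}) + (1 - σ(m/τ)) m`.
The first term is `e^{-m} + o(e^{-m})`. The second is at most `m e^{-m/τ}`, which is
`o(e^{-m})` exactly because `1/τ > 1`.
-/

lemma sigmoid_eq_real_sigmoid : _root_.sigmoid = Real.sigmoid :=
  funext fun _ => one_div _

namespace Real

lemma log_sigmoid (t : ℝ) : log (Real.sigmoid t) = -log (1 + exp (-t)) := by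
  rw [Real.sigmoid_def, log_inv]

lemma log_one_sub_sigmoid (t : ℝ) : log (1 - Real.sigmoid t) = log (Real.sigmoid t) - t := by
  rw [← Real.sigmoid_neg, ← Real.sigmoid_mul_rexp_neg,
    log_mul (Real.sigmoid_pos t).ne' (exp_pos _).ne', log_exp, sub_eq_add_neg]

lemma tendsto_log_one_add_exp_neg_div_exp_neg :
    Tendsto (fun m : ℝ => log (1 + exp (-m)) / exp (-m)) atTop (𝓝 1) := by
  refine ((tendsto_mul_log_one_add_div_atTop 1).comp tendsto_exp_atTop).congr fun m => ?_
  simp only [Function.comp_apply, exp_neg, one_div, div_inv_eq_mul, mul_comm]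

end Real

lemma selfTrainLoss_eq (τ m : ℝ) :
    selfTrainLoss τ m = log (1 + exp (-m)) + (1 - Real.sigmoid (m / τ)) * m := by
  rw [selfTrainLoss, sigmoid_eq_real_sigmoid, log_one_sub_sigmoid, log_sigmoid]
  ring

lemma tendsto_one_sub_sigmoid_div_mul_div_exp_neg {τ : ℝ} (hτ0 : 0 < τ) (hτ1 : τ < 1) :
    Tendsto (fun m : ℝ => (1 - Real.sigmoid (m / τ)) * m / exp (-m)) atTop (𝓝 0) := by
  have hsig : Tendsto (fun m : ℝ => Real.sigmoid (m / τ)) atTop (𝓝 1) :=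
    Real.tendsto_sigmoid_atTop.comp (tendsto_id.atTop_div_const hτ0)
  have hdecay := tendsto_rpow_mul_exp_neg_mul_atTop_nhds_zero 1 (1 / τ - 1)
    (by rw [sub_pos, lt_div_iff₀ hτ0, one_mul]; exact hτ1)
  have h := hsig.mul hdecay
  rw [one_mul] at h
  refine h.congr fun m => ?_
  have hexp : exp (-(m / τ)) * exp m = exp (-(1 / τ - 1) * m) := by
    rw [← exp_add]; ring_nf
  rw [← Real.sigmoid_neg, ← Real.sigmoid_mul_rexp_neg, rpow_one, exp_neg m,
    div_inv_eq_mul]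
  linear_combination -(Real.sigmoid (m / τ) * m) * hexp

/-- For `0 < τ < 1`, the binary self-training loss has an exponential tail:
`ℓ_τ(m) / e^{−m} → 1` as `m → ∞`. -/
theorem stmt12 (τ : ℝ) (hτ0 : 0 < τ) (hτ1 : τ < 1) :
    Filter.Tendsto (fun m : ℝ => selfTrainLoss τ m / Real.exp (-m))
      Filter.atTop (nhds 1) := by
  have h := tendsto_log_one_add_exp_neg_div_exp_neg.add
    (tendsto_one_sub_sigmoid_div_mul_div_exp_neg hτ0 hτ1)
  rw [add_zero] at h
  refine h.congr fun m => ?_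
  rw [selfTrainLoss_eq, add_div]
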